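/- For all u ∈ [0,1], the derivative of g_{a₁,…,a_q} satisfies 0 ≤ g'_{a₁,…,a_q}(u) ≤ ∏_{i=2}^q max(1,aᵢ) / min(1, (∑aᵢ)/q)^q + |∑aᵢ − q| · ∏_{i=2}^q max(1,aᵢ) / min(1, (∑aᵢ)/q)^{q+1} + (∑_{i=2}^q |1−aᵢ| · ∏_{2≤j≤q, j≠i} max(1,a_j)) / min(1, (∑aᵢ)/q)^q. -/

import Mathlib

noncomputable def g (q : ℕ) (a : ℕ → ℝ) (u : ℝ) : ℝ :=
  (q : ℝ) ^ q * u * (∏ i ∈ Finset.Icc 2 q, (a i + u - a i * u)) /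
    ((∑ i ∈ Finset.Icc 1 q, a i) - ((∑ i ∈ Finset.Icc 1 q, a i) - q) * u) ^ q

/-!
With `dᵢ = aᵢ + u - aᵢu`, a convex combination of `aᵢ` and `1`, the denominator of `g` is
`D = ∑ᵢ dᵢ = q (S/q + u - (S/q) u)` where `S = ∑ᵢ aᵢ`. Hence `D ≥ q · min 1 (S/q)` and
`dᵢ ≤ max 1 aᵢ`, which bound the three terms of `g'` one by one.

For the sign, `(log g)' = 1/u + ∑_{i ≥ 2} eᵢ - q D'/D` with `eᵢ = (1 - aᵢ)/dᵢ`. The `eᵢ` and `dᵢ`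
are oppositely ordered, so Chebyshev's sum inequality gives `q ∑ᵢ eᵢdᵢ ≤ (∑ᵢ eᵢ)(∑ᵢ dᵢ)`, that is
`q D'/D ≤ ∑ᵢ eᵢ`; what remains is `1/u - e₁ ≥ 0`, which holds as `a₁ > 0`.
-/

open Finset

section ConvexCombination

variable {x u : ℝ}

lemma min_one_le_add_sub_mul (hu : u ∈ Set.Icc (0 : ℝ) 1) : min 1 x ≤ x + u - x * u := by
  obtain ⟨hu0, hu1⟩ := hu
  rcases le_total 1 x with h | h
  · rw [min_eq_left h]; nlinarith
  · rw [min_eq_right h]; nlinarith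

lemma add_sub_mul_le_max_one (hu : u ∈ Set.Icc (0 : ℝ) 1) : x + u - x * u ≤ max 1 x := by
  obtain ⟨hu0, hu1⟩ := hu
  rcases le_total 1 x with h | h
  · rw [max_eq_right h]; nlinarith
  · rw [max_eq_left h]; nlinarith

lemma add_sub_mul_pos (hx : 0 < x) (hu : u ∈ Set.Icc (0 : ℝ) 1) : 0 < x + u - x * u :=
  (lt_min one_pos hx).trans_le (min_one_le_add_sub_mul hu)

lemma mul_min_one_div_le {n S : ℝ} (hn : 0 < n) (hu : u ∈ Set.Icc (0 : ℝ) 1) :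
    n * min 1 (S / n) ≤ S - (S - n) * u :=
  calc n * min 1 (S / n) ≤ n * (S / n + u - S / n * u) := by
        gcongr; exact min_one_le_add_sub_mul hu
    _ = S - (S - n) * u := by field_simp; ring

end ConvexCombination

lemma hasDerivAt_prod_add_sub_mul {ι : Type*} [DecidableEq ι] (s : Finset ι) (a : ι → ℝ)
    (u : ℝ) :
    HasDerivAt (fun x => ∏ i ∈ s, (a i + x - a i * x))
      (∑ i ∈ s, (∏ j ∈ s.erase i, (a j + u - a j * u)) * (1 - a i)) u := by
  have hfactor (i : ι) : HasDerivAt (fun x => a i + x - a i * x) (1 - a i) u := by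
    simpa using ((hasDerivAt_id u).const_add (a i)).fun_sub ((hasDerivAt_id u).const_mul (a i))
  simpa only [smul_eq_mul] using HasDerivAt.fun_finsetProd fun i _ => hfactor i

section AffineFactors

variable {ι : Type*} {a : ι → ℝ} {u : ℝ}

lemma prod_add_sub_mul_le_prod_max_one (s : Finset ι) (ha : ∀ i ∈ s, 0 < a i)
    (hu : u ∈ Set.Icc (0 : ℝ) 1) :
    ∏ i ∈ s, (a i + u - a i * u) ≤ ∏ i ∈ s, max 1 (a i) :=
  prod_le_prod (fun i hi => (add_sub_mul_pos (ha i hi) hu).le)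
    fun _ _ => add_sub_mul_le_max_one hu

lemma antivaryOn_div_add_sub_mul (t : Set ι) (ha : ∀ i ∈ t, 0 < a i)
    (hu : u ∈ Set.Icc (0 : ℝ) 1) :
    AntivaryOn (fun i => (1 - a i) / (a i + u - a i * u)) (fun i => a i + u - a i * u) t := by
  intro i hi j hj hlt
  have hdi := add_sub_mul_pos (ha i hi) hu
  have hdj := add_sub_mul_pos (ha j hj) hu
  have haij : a i ≤ a j := by
    by_contra! h
    nlinarith [mul_nonneg (sub_nonneg.2 hu.2) (sub_nonneg.2 h.le)]
  rw [div_le_div_iff₀ hdj hdi]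
  -- the cross difference `(1 - aᵢ) dⱼ - (1 - aⱼ) dᵢ` is exactly `aⱼ - aᵢ`
  nlinarith

variable [DecidableEq ι]

lemma prod_mul_sum_div_eq (s : Finset ι) (d c : ι → ℝ) (hd : ∀ i ∈ s, d i ≠ 0) :
    (∏ i ∈ s, d i) * ∑ i ∈ s, c i / d i = ∑ i ∈ s, (∏ j ∈ s.erase i, d j) * c i := by
  rw [mul_sum]
  refine sum_congr rfl fun i hi => ?_
  rw [← mul_prod_erase s d hi]
  field_simp [hd i hi]

lemma mul_sum_prod_erase_le (s : Finset ι) (ha : ∀ i ∈ s, 0 < a i) (hu : u ∈ Set.Icc (0 : ℝ) 1) :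
    u * ∑ i ∈ s, (∏ j ∈ s.erase i, (a j + u - a j * u)) * (1 - a i)
      ≤ ∑ i ∈ s, |1 - a i| * ∏ j ∈ s.erase i, max 1 (a j) := by
  rw [mul_sum]
  refine sum_le_sum fun i _ => ?_
  have hprod_nonneg : 0 ≤ ∏ j ∈ s.erase i, (a j + u - a j * u) :=
    prod_nonneg fun j hj => (add_sub_mul_pos (ha j (mem_of_mem_erase hj)) hu).le
  have hprod_le := prod_add_sub_mul_le_prod_max_one (s.erase i)
    (fun j hj => ha j (mem_of_mem_erase hj)) hu
  calc u * ((∏ j ∈ s.erase i, (a j + u - a j * u)) * (1 - a i))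
      ≤ |u * ((∏ j ∈ s.erase i, (a j + u - a j * u)) * (1 - a i))| := le_abs_self _
    _ = u * (∏ j ∈ s.erase i, (a j + u - a j * u)) * |1 - a i| := by
        rw [abs_mul, abs_mul, abs_of_nonneg hu.1, abs_of_nonneg hprod_nonneg, mul_assoc]
    _ ≤ 1 * (∏ j ∈ s.erase i, max 1 (a j)) * |1 - a i| := by
        gcongr
        exact hu.2
    _ = |1 - a i| * ∏ j ∈ s.erase i, max 1 (a j) := by ring

lemma mul_card_mul_sum_le (s : Finset ι) {i₀ : ι} (hi₀ : i₀ ∈ s) (ha : ∀ i ∈ s, 0 < a i)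
    (hu : u ∈ Set.Icc (0 : ℝ) 1) :
    u * (#s * ∑ i ∈ s, (1 - a i))
      ≤ (1 + u * ∑ i ∈ s.erase i₀, (1 - a i) / (a i + u - a i * u))
        * ∑ i ∈ s, (a i + u - a i * u) := by
  set e := fun i => (1 - a i) / (a i + u - a i * u)
  set d := fun i => a i + u - a i * u
  have hd : ∀ i ∈ s, 0 < d i := fun i hi => add_sub_mul_pos (ha i hi) hu
  have hchebyshev : #s * ∑ i ∈ s, e i * d i ≤ (∑ i ∈ s, e i) * ∑ i ∈ s, d i :=
    (antivaryOn_div_add_sub_mul _ ha hu).card_mul_sum_le_sum_mul_sum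
  have hed : ∑ i ∈ s, e i * d i = ∑ i ∈ s, (1 - a i) :=
    sum_congr rfl fun i hi => div_mul_cancel₀ _ (hd i hi).ne'
  have he₀ : u * e i₀ ≤ 1 := by
    rw [mul_div_assoc', div_le_one (hd i₀ hi₀)]
    nlinarith [ha i₀ hi₀]
  have hdsum : 0 ≤ ∑ i ∈ s, d i := sum_nonneg fun i hi => (hd i hi).le
  calc u * (#s * ∑ i ∈ s, (1 - a i))
      ≤ u * ((∑ i ∈ s, e i) * ∑ i ∈ s, d i) := by
        rw [← hed]; exact mul_le_mul_of_nonneg_left hchebyshev hu.1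
    _ = (u * e i₀ + u * ∑ i ∈ s.erase i₀, e i) * ∑ i ∈ s, d i := by
        rw [← add_sum_erase s e hi₀]; ring
    _ ≤ (1 + u * ∑ i ∈ s.erase i₀, e i) * ∑ i ∈ s, d i := by gcongr

lemma deriv_numerator_nonneg (s : Finset ι) {i₀ : ι} (hi₀ : i₀ ∈ s) (ha : ∀ i ∈ s, 0 < a i)
    (hu : u ∈ Set.Icc (0 : ℝ) 1) :
    0 ≤ ((∏ i ∈ s.erase i₀, (a i + u - a i * u))
          + u * ∑ i ∈ s.erase i₀, (∏ j ∈ (s.erase i₀).erase i, (a j + u - a j * u)) * (1 - a i))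
        * ((∑ i ∈ s, a i) - ((∑ i ∈ s, a i) - #s) * u)
      + #s * u * (∏ i ∈ s.erase i₀, (a i + u - a i * u)) * ((∑ i ∈ s, a i) - #s) := by
  have hd : ∀ i ∈ s.erase i₀, a i + u - a i * u ≠ 0 :=
    fun i hi => (add_sub_mul_pos (ha i (mem_of_mem_erase hi)) hu).ne'
  have hP : 0 ≤ ∏ i ∈ s.erase i₀, (a i + u - a i * u) :=
    prod_nonneg fun i hi => (add_sub_mul_pos (ha i (mem_of_mem_erase hi)) hu).le
  have hsum_one_sub : ∑ i ∈ s, (1 - a i) = #s - ∑ i ∈ s, a i := by simp [sum_sub_distrib]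
  have hsum_d : ∑ i ∈ s, (a i + u - a i * u)
      = (∑ i ∈ s, a i) - ((∑ i ∈ s, a i) - #s) * u := by
    simp only [sum_sub_distrib, sum_add_distrib, sum_const, nsmul_eq_mul, ← sum_mul]
    ring
  have hkey := mul_card_mul_sum_le s hi₀ ha hu
  rw [hsum_one_sub, hsum_d] at hkey
  rw [← prod_mul_sum_div_eq _ _ _ hd]
  nlinarith [mul_le_mul_of_nonneg_left hkey hP]

end AffineFactors

lemma hasDerivAt_g (q : ℕ) (hq : 1 ≤ q) (a : ℕ → ℝ) (u : ℝ)
    (hD : (∑ i ∈ Icc 1 q, a i) - ((∑ i ∈ Icc 1 q, a i) - q) * u ≠ 0) :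
    HasDerivAt (g q a)
      ((q : ℝ) ^ q * (((∏ i ∈ Icc 2 q, (a i + u - a i * u))
          + u * ∑ i ∈ Icc 2 q, (∏ j ∈ (Icc 2 q).erase i, (a j + u - a j * u)) * (1 - a i))
          * ((∑ i ∈ Icc 1 q, a i) - ((∑ i ∈ Icc 1 q, a i) - q) * u)
        + q * u * (∏ i ∈ Icc 2 q, (a i + u - a i * u)) * ((∑ i ∈ Icc 1 q, a i) - q))
        / ((∑ i ∈ Icc 1 q, a i) - ((∑ i ∈ Icc 1 q, a i) - q) * u) ^ (q + 1)) u := by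
  set S := ∑ i ∈ Icc 1 q, a i
  have hnum := ((hasDerivAt_id' u).const_mul ((q : ℝ) ^ q)).fun_mul
    (hasDerivAt_prod_add_sub_mul (Icc 2 q) a u)
  have hden := (((hasDerivAt_id' u).const_mul (S - q)).const_sub S).fun_pow q
  refine (hnum.fun_div hden (pow_ne_zero q hD)).congr_deriv ?_
  obtain ⟨k, rfl⟩ : ∃ k, q = k + 1 := ⟨q - 1, by omega⟩
  rw [div_eq_div_iff (pow_ne_zero 2 (pow_ne_zero _ hD)) (pow_ne_zero _ hD)]
  simp only [Nat.add_sub_cancel]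
  push_cast
  ring

lemma pow_mul_div_pow_le {n : ℕ} {c m D x y : ℝ} (hc : 0 < c) (hm : 0 < m) (hmD : c * m ≤ D)
    (hxy : x ≤ y) (hy : 0 ≤ y) :
    c ^ n * x / D ^ n ≤ y / m ^ n := by
  calc c ^ n * x / D ^ n ≤ c ^ n * y / (c * m) ^ n := by gcongr
    _ = y / m ^ n := by rw [mul_pow, mul_div_mul_left _ _ (by positivity)]

lemma pow_mul_div_pow_succ_le {n : ℕ} {c m D u x P P' M C : ℝ} (hc : 0 < c) (hm : 0 < m)
    (hmD : c * m ≤ D) (hu : u ∈ Set.Icc (0 : ℝ) 1) (hP : 0 ≤ P) (hPM : P ≤ M)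
    (hP'C : u * P' ≤ C) (hC : 0 ≤ C) :
    c ^ n * ((P + u * P') * D + c * u * P * x) / D ^ (n + 1)
      ≤ M / m ^ n + |x| * (M / m ^ (n + 1)) + C / m ^ n := by
  have hD : 0 < D := (mul_pos hc hm).trans_le hmD
  have hM : 0 ≤ M := hP.trans hPM
  have hsplit : c ^ n * ((P + u * P') * D + c * u * P * x) / D ^ (n + 1)
      = c ^ n * P / D ^ n + c ^ (n + 1) * (u * P * x) / D ^ (n + 1)
        + c ^ n * (u * P') / D ^ n := by
    field_simp
    ring
  have huPx : u * P * x ≤ M * |x| :=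
    calc u * P * x ≤ u * P * |x| := by have := hu.1; gcongr; exact le_abs_self _
      _ ≤ 1 * M * |x| := by gcongr; exact hu.2
      _ = M * |x| := by rw [one_mul]
  rw [hsplit, mul_div_assoc', mul_comm |x|]
  gcongr ?_ + ?_ + ?_
  · exact pow_mul_div_pow_le hc hm hmD hPM hM
  · exact pow_mul_div_pow_le hc hm hmD huPx (by positivity)
  · exact pow_mul_div_pow_le hc hm hmD hP'C hC

theorem stmt_10 (q : ℕ) (hq : 1 ≤ q) (a : ℕ → ℝ)
    (ha : ∀ i ∈ Finset.Icc 1 q, 0 < a i)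
    (u : ℝ) (hu : u ∈ Set.Icc (0:ℝ) 1) :
    0 ≤ deriv (g q a) u ∧
    deriv (g q a) u ≤
      (∏ i ∈ Finset.Icc 2 q, max 1 (a i)) /
        (min 1 ((∑ i ∈ Finset.Icc 1 q, a i) / q)) ^ q
      + |(∑ i ∈ Finset.Icc 1 q, a i) - q| *
          ((∏ i ∈ Finset.Icc 2 q, max 1 (a i)) /
            (min 1 ((∑ i ∈ Finset.Icc 1 q, a i) / q)) ^ (q + 1))
      + (∑ i ∈ Finset.Icc 2 q, |1 - a i| *
          ∏ j ∈ (Finset.Icc 2 q).erase i, max 1 (a j)) /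
          (min 1 ((∑ i ∈ Finset.Icc 1 q, a i) / q)) ^ q := by
  set S := ∑ i ∈ Icc 1 q, a i
  have ha₂ (i : ℕ) (hi : i ∈ Icc 2 q) : 0 < a i := ha i (Icc_subset_Icc_left one_le_two hi)
  have hq0 : (0 : ℝ) < q := by exact_mod_cast hq
  have hm : 0 < min 1 (S / q) := lt_min one_pos (div_pos (sum_pos ha ⟨1, by simp [hq]⟩) hq0)
  have hmD := mul_min_one_div_le (S := S) hq0 hu
  have hD : 0 < S - (S - q) * u := (mul_pos hq0 hm).trans_le hmD
  have hnum := deriv_numerator_nonneg (Icc 1 q) (i₀ := 1) (by simp [hq]) ha hu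
  rw [Icc_erase_left, ← Icc_add_one_left_eq_Ioc, Nat.card_Icc, Nat.add_sub_cancel,
    one_add_one_eq_two] at hnum
  rw [(hasDerivAt_g q hq a u hD.ne').deriv]
  refine ⟨div_nonneg (mul_nonneg (by positivity) hnum) (by positivity), ?_⟩
  exact pow_mul_div_pow_succ_le hq0 hm hmD hu
    (prod_nonneg fun i hi => (add_sub_mul_pos (ha₂ i hi) hu).le)
    (prod_add_sub_mul_le_prod_max_one _ ha₂ hu) (mul_sum_prod_erase_le _ ha₂ hu) (by positivity)
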